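/- Let V be a finite-dimensional real normed vector space, let S ⊆ V be a subset, and let U be a set of invertible continuous linear maps V → V such that sup_{u ∈ U} ‖u‖_op < ∞ and u(S) = S for every u ∈ U. Let C ⊆ V be a cone such that the set D = {u(x) : u ∈ U, x ∈ C} is open in V. If ξ ∈ AC(S), ξ ≠ 0, and ξ ∈ D, then the set S ∩ C is unbounded. -/

import Mathlib

open Pointwise Bornology

/-- A subset `C` of a real vector space is a cone if `t • C = C` for every `t > 0`. -/
def IsCone {V : Type*} [NormedAddCommGroup V] [NormedSpace ℝ V] (C : Set V) : Prop :=
  ∀ t : ℝ, 0 < t → t • C = C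

/-- The asymptotic cone of a subset `S`: the set of `ξ` such that every open cone
containing `ξ` meets `S` in an unbounded set, together with `0`. -/
def asymptoticCone' {V : Type*} [NormedAddCommGroup V] [NormedSpace ℝ V] (S : Set V) : Set V :=
  {ξ : V | ∀ C : Set V, IsOpen C → IsCone C → ξ ∈ C → ¬ IsBounded (C ∩ S)} ∪ {0}

/-!
The `U`-saturation `D` of `C` is again a cone, and it is open and contains `ξ`, so `D ∩ S` is
unbounded. On the other hand every point of `D ∩ S` is `u x` with `x ∈ S ∩ C` (as `u` preserves
`S`), so `D ∩ S` has norm at most `M · sup ‖S ∩ C‖`, which is finite if `S ∩ C` is bounded.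
-/

def saturation {F V W : Type*} [FunLike F V W] (U : Set F) (C : Set V) : Set W :=
  {y : W | ∃ u ∈ U, ∃ x ∈ C, y = u x}

section Cone

variable {V : Type*} [NormedAddCommGroup V] [NormedSpace ℝ V] {C : Set V}

theorem IsCone.smul_mem (hC : IsCone C) {t : ℝ} (ht : 0 < t) {x : V} (hx : x ∈ C) :
    t • x ∈ C :=
  hC t ht ▸ Set.smul_mem_smul_set hx

theorem isCone_of_smul_mem (h : ∀ t : ℝ, 0 < t → ∀ x ∈ C, t • x ∈ C) : IsCone C := by
  intro t ht
  refine subset_antisymm (Set.smul_set_subset_iff.2 fun x hx => h t ht x hx) fun x hx => ?_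
  exact ⟨t⁻¹ • x, h _ (inv_pos.2 ht) x hx, smul_inv_smul₀ ht.ne' x⟩

theorem IsCone.saturation {F : Type*} [FunLike F V V] [LinearMapClass F ℝ V V] (hC : IsCone C)
    (U : Set F) : IsCone (saturation U C : Set V) :=
  isCone_of_smul_mem fun t ht _ ⟨u, hu, x, hx, hy⟩ =>
    ⟨u, hu, t • x, hC.smul_mem ht hx, by rw [hy, map_smul]⟩

theorem not_isBounded_inter_of_mem_asymptoticCone' {S D : Set V} {ξ : V}
    (hξ : ξ ∈ asymptoticCone' S) (hξ0 : ξ ≠ 0) (hD : IsOpen D) (hDcone : IsCone D)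
    (hξD : ξ ∈ D) : ¬ IsBounded (D ∩ S) := by
  rcases hξ with hξ | hξ
  · exact hξ D hD hDcone hξD
  · exact absurd hξ hξ0

end Cone

theorem isBounded_saturation_inter {𝕜 E F : Type*} [NontriviallyNormedField 𝕜]
    [SeminormedAddCommGroup E] [NormedSpace 𝕜 E] [SeminormedAddCommGroup F] [NormedSpace 𝕜 F]
    {U : Set (E ≃L[𝕜] F)} {M : ℝ} (hUbd : ∀ u ∈ U, ‖(u : E →L[𝕜] F)‖ ≤ M)
    {S : Set F} {T C : Set E} (hUS : ∀ u ∈ U, ∀ x, u x ∈ S → x ∈ T)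
    (hTC : IsBounded (T ∩ C)) : IsBounded (saturation U C ∩ S) := by
  obtain ⟨R, hR⟩ := isBounded_iff_forall_norm_le.1 hTC
  refine isBounded_iff_forall_norm_le.2 ⟨M * R, ?_⟩
  rintro _ ⟨⟨u, hu, x, hx, rfl⟩, hxS⟩
  calc ‖u x‖ ≤ ‖(u : E →L[𝕜] F)‖ * ‖x‖ := (u : E →L[𝕜] F).le_opNorm x
    _ ≤ M * R := mul_le_mul (hUbd u hu) (hR x ⟨hUS u hu x hxS, hx⟩) (norm_nonneg _)
          ((norm_nonneg _).trans (hUbd u hu))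

theorem unbounded_inter_of_mem_asymptoticCone_general {V : Type*} [NormedAddCommGroup V]
    [NormedSpace ℝ V] (S : Set V) (U : Set (V ≃L[ℝ] V))
    (hUbd : ∃ M : ℝ, ∀ u ∈ U, ‖(u : V →L[ℝ] V)‖ ≤ M)
    (hUS : ∀ u ∈ U, (u : V → V) '' S = S)
    (C : Set V) (hC : IsCone C)
    (hD : IsOpen {y : V | ∃ u ∈ U, ∃ x ∈ C, y = u x})
    (ξ : V) (hξAC : ξ ∈ asymptoticCone' S) (hξ0 : ξ ≠ 0)
    (hξD : ξ ∈ {y : V | ∃ u ∈ U, ∃ x ∈ C, y = u x}) :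
    ¬ IsBounded (S ∩ C) := by
  intro hbd
  obtain ⟨M, hM⟩ := hUbd
  have hSinv : ∀ u ∈ U, ∀ x, u x ∈ S → x ∈ S := fun u hu x hx =>
    u.injective.mem_set_image.1 (by rwa [hUS u hu])
  exact not_isBounded_inter_of_mem_asymptoticCone' hξAC hξ0 hD (hC.saturation U) hξD
    (isBounded_saturation_inter hM hSinv hbd)

/-- If `S` is invariant under a family `U` of invertible continuous linear maps with
uniformly bounded operator norms, `C` is a cone whose `U`-saturation
`D = {u x : u ∈ U, x ∈ C}` is open, and `ξ` is a nonzero element of the asymptotic cone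
of `S` lying in `D`, then `S ∩ C` is unbounded. -/
theorem unbounded_inter_of_mem_asymptoticCone {V : Type*} [NormedAddCommGroup V]
    [NormedSpace ℝ V] [FiniteDimensional ℝ V] (S : Set V) (U : Set (V ≃L[ℝ] V))
    (hUbd : ∃ M : ℝ, ∀ u ∈ U, ‖(u : V →L[ℝ] V)‖ ≤ M)
    (hUS : ∀ u ∈ U, (u : V → V) '' S = S)
    (C : Set V) (hC : IsCone C)
    (hD : IsOpen {y : V | ∃ u ∈ U, ∃ x ∈ C, y = u x})
    (ξ : V) (hξAC : ξ ∈ asymptoticCone' S) (hξ0 : ξ ≠ 0)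
    (hξD : ξ ∈ {y : V | ∃ u ∈ U, ∃ x ∈ C, y = u x}) :
    ¬ IsBounded (S ∩ C) :=
  unbounded_inter_of_mem_asymptoticCone_general S U hUbd hUS C hC hD ξ hξAC hξ0 hξD
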